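/- A bounded linear operator A on a nonzero complex Hilbert space is normaloid if and only if w₀(A) = w(A), where w₀(A) = sup{|z| : z ∈ W₀(A)} and w(A) is the numerical radius. -/

import Mathlib

open Filter Topology

/-- The numerical range `W(A) = {⟨Ax, x⟩ : ‖x‖ = 1}`. -/
def numRange {H : Type*} [NormedAddCommGroup H] [InnerProductSpace ℂ H]
    (A : H →L[ℂ] H) : Set ℂ :=
  {z | ∃ x : H, ‖x‖ = 1 ∧ (inner ℂ (A x) x : ℂ) = z}

/-- The maximal numerical range of a bounded linear operator `A` on a complex
Hilbert space: the set of `λ ∈ ℂ` for which there is a sequence of unit vectors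
`xₙ` with `‖A xₙ‖ → ‖A‖` and `⟨A xₙ, xₙ⟩ → λ`. -/
def maxNumRange {H : Type*} [NormedAddCommGroup H] [InnerProductSpace ℂ H]
    (A : H →L[ℂ] H) : Set ℂ :=
  {lam | ∃ x : ℕ → H, (∀ n, ‖x n‖ = 1) ∧
    Tendsto (fun n => ‖A (x n)‖) atTop (𝓝 ‖A‖) ∧
    Tendsto (fun n => (inner ℂ (A (x n)) (x n) : ℂ)) atTop (𝓝 lam)}

/-!
Always `w₀(A) ≤ w(A) ≤ ‖A‖`, and `W₀(A)` is the slice `t = ‖A‖` of the compact closure of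
`{(‖Ax‖, ⟨Ax, x⟩) : ‖x‖ = 1}`. If `w(A) = ‖A‖`, a point of that closure maximising `|⟨Ax, x⟩|`
lies in the slice, so `w₀(A) = w(A)`.

Conversely, pick `μ ∈ W₀(A)` with `|μ| = w₀(A) = w(A)` and rotate `A` so that `μ = w ≥ 0`. Along
a sequence of unit vectors `xₙ` witnessing `w ∈ W₀(A)`, the quadratic forms of the positive
operators `‖A‖² - A*A` and `2w - (A + A*)` tend to `0`, hence so do the operators applied to `xₙ`.
For `T = A - w` and `δ = ‖A‖² - w²` this says `T* xₙ ≈ -T xₙ` and `T*T xₙ ≈ δ xₙ`, so on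
`vₙ = xₙ + i T xₙ` we get `⟨A vₙ, vₙ⟩ → w (1 + δ) + 2iδ` while `‖vₙ‖² → 1 + δ`. The bound
`|⟨Av, v⟩| ≤ w ‖v‖²` then forces `δ = 0`, that is `‖A‖ = w`.
-/

open RCLike hiding I
open scoped InnerProductSpace

namespace ContinuousLinearMap.IsPositive

variable {𝕜 E : Type*} [RCLike 𝕜] [NormedAddCommGroup E] [InnerProductSpace 𝕜 E]
  {S : E →L[𝕜] E}

theorem norm_apply_sq_le (hS : S.IsPositive) (x : E) :
    ‖S x‖ ^ 2 ≤ ‖S‖ * re ⟪S x, x⟫_𝕜 := by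
  -- Cauchy–Schwarz for the semi-inner product `⟪S ·, ·⟫`, tested on `x` and `S x`.
  set a := re ⟪S (S x), S x⟫_𝕜
  set c := re ⟪S x, x⟫_𝕜
  have hquad : ∀ t : ℝ, 0 ≤ a * (t * t) + 2 * ‖S x‖ ^ 2 * t + c := fun t => by
    have h := hS.re_inner_nonneg_left (x + (t : 𝕜) • S x)
    simp only [map_add, map_smul, inner_add_left, inner_add_right, inner_smul_left,
      inner_smul_right, conj_ofReal, hS.inner_left_eq_inner_right (S x) x] at h
    simp only [map_add, re_ofReal_mul, inner_self_eq_norm_sq] at h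
    linarith
  have hdisc := discrim_le_zero hquad
  have ha : a ≤ ‖S‖ * ‖S x‖ ^ 2 := calc
    a ≤ ‖S (S x)‖ * ‖S x‖ := (re_le_norm _).trans (norm_inner_le_norm _ _)
    _ ≤ ‖S‖ * ‖S x‖ * ‖S x‖ := by gcongr; exact S.le_opNorm _
    _ = ‖S‖ * ‖S x‖ ^ 2 := by ring
  have hc : 0 ≤ c := hS.re_inner_nonneg_left x
  rcases (sq_nonneg ‖S x‖).eq_or_lt with h0 | hpos
  · rw [← h0]; positivity
  · unfold discrim at hdisc
    have : ‖S x‖ ^ 2 * ‖S x‖ ^ 2 ≤ ‖S x‖ ^ 2 * (‖S‖ * c) := by nlinarith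
    exact le_of_mul_le_mul_left this hpos

theorem tendsto_apply_nhds_zero (hS : S.IsPositive) {ι : Type*} {l : Filter ι} {x : ι → E}
    (hx : Tendsto (fun i => re ⟪S (x i), x i⟫_𝕜) l (𝓝 0)) :
    Tendsto (fun i => S (x i)) l (𝓝 0) := by
  rw [tendsto_zero_iff_norm_tendsto_zero]
  have hbound : Tendsto (fun i => √(‖S‖ * re ⟪S (x i), x i⟫_𝕜)) l (𝓝 0) := by
    simpa using (hx.const_mul ‖S‖).sqrt
  exact squeeze_zero (fun _ => norm_nonneg _)
    (fun i => Real.le_sqrt_of_sq_le (hS.norm_apply_sq_le (x i))) hbound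

end ContinuousLinearMap.IsPositive

theorem tendsto_inner_nhds_zero_of_norm_le {𝕜 E : Type*} [RCLike 𝕜] [NormedAddCommGroup E]
    [InnerProductSpace 𝕜 E] {ι : Type*} {l : Filter ι} {y z : ι → E} {C : ℝ}
    (hy : ∀ i, ‖y i‖ ≤ C) (hz : Tendsto z l (𝓝 0)) :
    Tendsto (fun i => ⟪y i, z i⟫_𝕜) l (𝓝 0) := by
  have hC : Tendsto (fun i => C * ‖z i‖) l (𝓝 0) := by
    simpa using (tendsto_norm_zero.comp hz).const_mul C
  exact squeeze_zero_norm (fun i => (norm_inner_le_norm _ _).trans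
    (mul_le_mul_of_nonneg_right (hy i) (norm_nonneg _))) hC

open Complex (I)

namespace ContinuousLinearMap
variable {H : Type*} [NormedAddCommGroup H] [InnerProductSpace ℂ H] [CompleteSpace H]

theorem tendsto_adjoint_apply_apply_sub (A : H →L[ℂ] H) {ι : Type*} {l : Filter ι} {x : ι → H}
    (hx : ∀ i, ‖x i‖ = 1) (hA : Tendsto (fun i => ‖A (x i)‖) l (𝓝 ‖A‖)) :
    Tendsto (fun i => adjoint A (A (x i)) - ((‖A‖ ^ 2 : ℝ) : ℂ) • x i) l (𝓝 0) := by
  set S := algebraMap ℝ (H →L[ℂ] H) (‖A‖ ^ 2) - star A * A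
  have hpos : S.IsPositive := (le_def _ _).1 CStarAlgebra.star_mul_le_algebraMap_norm_sq
  have hS : ∀ i, S (x i) = -(adjoint A (A (x i)) - ((‖A‖ ^ 2 : ℝ) : ℂ) • x i) := fun i => by
    simp only [S, sub_apply, star_eq_adjoint, algebraMap_apply, Complex.coe_smul, neg_sub]
    rfl
  have hre : ∀ i, re ⟪S (x i), x i⟫_ℂ = ‖A‖ ^ 2 - ‖A (x i)‖ ^ 2 := fun i => by
    simp [hS, adjoint_inner_left, hx i, ← Complex.ofReal_pow]
  have hlim := (hA.pow 2).const_sub (‖A‖ ^ 2)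
  rw [sub_self] at hlim
  have := hpos.tendsto_apply_nhds_zero (x := x) (by simpa only [hre] using hlim)
  simpa [hS] using this.neg

theorem re_inner_neg_add_adjoint_apply (T : H →L[ℂ] H) (v : H) :
    re ⟪(-(T + adjoint T)) v, v⟫_ℂ = -2 * re ⟪T v, v⟫_ℂ := by
  rw [neg_apply, add_apply, inner_neg_left, inner_add_left, adjoint_inner_left, map_neg,
    map_add, inner_re_symm v]
  ring

theorem tendsto_add_adjoint_apply (T : H →L[ℂ] H) (hT : ∀ v, re ⟪T v, v⟫_ℂ ≤ 0)
    {ι : Type*} {l : Filter ι} {x : ι → H} (hx : Tendsto (fun i => ⟪T (x i), x i⟫_ℂ) l (𝓝 0)) :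
    Tendsto (fun i => (T + adjoint T) (x i)) l (𝓝 0) := by
  have hpos : (-(T + adjoint T)).IsPositive := by
    refine isPositive_def'.2 ⟨?_, fun v => ?_⟩
    · simpa only [star_eq_adjoint] using (IsSelfAdjoint.add_star_self T).neg
    · rw [reApplyInnerSelf, re_inner_neg_add_adjoint_apply]
      linarith [hT v]
  have hre : Tendsto (fun i => re ⟪(-(T + adjoint T)) (x i), x i⟫_ℂ) l (𝓝 0) := by
    simpa only [re_inner_neg_add_adjoint_apply, Function.comp_def, map_zero, mul_zero] using
      ((continuous_re.tendsto 0).comp hx).const_mul (-2)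
  simpa using (hpos.tendsto_apply_nhds_zero hre).neg

section Compression

variable (T : H →L[ℂ] H) {ι : Type*} {l : Filter ι} {x : ι → H} {δ : ℂ}

theorem tendsto_inner_apply_apply_self (hx : ∀ i, ‖x i‖ = 1)
    (h₃ : Tendsto (fun i => adjoint T (T (x i)) - δ • x i) l (𝓝 0)) :
    Tendsto (fun i => ⟪T (x i), T (x i)⟫_ℂ) l (𝓝 δ) := by
  have key : ∀ i, ⟪x i, adjoint T (T (x i)) - δ • x i⟫_ℂ = ⟪T (x i), T (x i)⟫_ℂ - δ := fun i => by
    rw [inner_sub_right, adjoint_inner_right, inner_smul_right,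
      inner_self_eq_one_of_norm_eq_one (hx i), mul_one]
  rw [← tendsto_sub_nhds_zero_iff]
  simpa only [key] using tendsto_inner_nhds_zero_of_norm_le (𝕜 := ℂ) (fun i => (hx i).le) h₃

theorem tendsto_inner_add_I_smul_self (hx : ∀ i, ‖x i‖ = 1)
    (h₁ : Tendsto (fun i => ⟪T (x i), x i⟫_ℂ) l (𝓝 0))
    (h₃ : Tendsto (fun i => adjoint T (T (x i)) - δ • x i) l (𝓝 0)) :
    Tendsto (fun i => ⟪x i + I • T (x i), x i + I • T (x i)⟫_ℂ) l (𝓝 (1 + δ)) := by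
  have key : ∀ i, ⟪x i + I • T (x i), x i + I • T (x i)⟫_ℂ
      = 1 + I * ⟪x i, T (x i)⟫_ℂ - I * ⟪T (x i), x i⟫_ℂ + ⟪T (x i), T (x i)⟫_ℂ := fun i => by
    simp only [inner_add_left, inner_add_right, inner_smul_left, inner_smul_right,
      inner_self_eq_one_of_norm_eq_one (hx i), Complex.conj_I]
    linear_combination -⟪T (x i), T (x i)⟫_ℂ * Complex.I_sq
  have hconj : Tendsto (fun i => ⟪x i, T (x i)⟫_ℂ) l (𝓝 0) := by
    simpa only [Function.comp_def, inner_conj_symm, map_zero] using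
      (Complex.continuous_conj.tendsto 0).comp h₁
  simpa only [key, mul_zero, add_zero, sub_zero] using
    ((tendsto_const_nhds.add (hconj.const_mul I)).sub (h₁.const_mul I)).add
      (T.tendsto_inner_apply_apply_self hx h₃)

theorem tendsto_inner_apply_add_I_smul (hx : ∀ i, ‖x i‖ = 1)
    (h₁ : Tendsto (fun i => ⟪T (x i), x i⟫_ℂ) l (𝓝 0))
    (h₂ : Tendsto (fun i => (T + adjoint T) (x i)) l (𝓝 0))
    (h₃ : Tendsto (fun i => adjoint T (T (x i)) - δ • x i) l (𝓝 0)) :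
    Tendsto (fun i => ⟪T (x i + I • T (x i)), x i + I • T (x i)⟫_ℂ) l (𝓝 (2 * I * δ)) := by
  have hTx : ∀ i, ‖T (x i)‖ ≤ ‖T‖ := fun i => by simpa [hx i] using T.le_opNorm (x i)
  have hTT := T.tendsto_inner_apply_apply_self hx h₃
  have hTTx : Tendsto (fun i => ⟪T (T (x i)), x i⟫_ℂ) l (𝓝 (-δ)) := by
    have key : ∀ i, ⟪T (T (x i)), x i⟫_ℂ
        = ⟪T (x i), (T + adjoint T) (x i)⟫_ℂ - ⟪T (x i), T (x i)⟫_ℂ := fun i => by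
      rw [add_apply, inner_add_right, adjoint_inner_right]
      ring
    simpa only [key, zero_sub] using (tendsto_inner_nhds_zero_of_norm_le (𝕜 := ℂ) hTx h₂).sub hTT
  have hTTT : Tendsto (fun i => ⟪T (T (x i)), T (x i)⟫_ℂ) l (𝓝 0) := by
    have key : ∀ i, ⟪T (T (x i)), T (x i)⟫_ℂ
        = ⟪T (x i), adjoint T (T (x i)) - δ • x i⟫_ℂ + δ * ⟪T (x i), x i⟫_ℂ := fun i => by
      rw [inner_sub_right, inner_smul_right, adjoint_inner_right]
      ring
    simpa only [key, mul_zero, add_zero] using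
      (tendsto_inner_nhds_zero_of_norm_le (𝕜 := ℂ) hTx h₃).add (h₁.const_mul δ)
  have key : ∀ i, ⟪T (x i + I • T (x i)), x i + I • T (x i)⟫_ℂ
      = ⟪T (x i), x i⟫_ℂ + I * ⟪T (x i), T (x i)⟫_ℂ - I * ⟪T (T (x i)), x i⟫_ℂ
        + ⟪T (T (x i)), T (x i)⟫_ℂ := fun i => by
    simp only [map_add, map_smul, inner_add_left, inner_add_right, inner_smul_left,
      inner_smul_right, Complex.conj_I]
    linear_combination -⟪T (T (x i)), T (x i)⟫_ℂ * Complex.I_sq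
  convert ((h₁.add (hTT.const_mul I)).sub (hTTx.const_mul I)).add hTTT using 2 with i
  · exact key i
  · ring

theorem eq_zero_of_forall_norm_inner_add_le [l.NeBot] {w δ : ℝ} (hx : ∀ i, ‖x i‖ = 1)
    (h₁ : Tendsto (fun i => ⟪T (x i), x i⟫_ℂ) l (𝓝 0))
    (h₂ : Tendsto (fun i => (T + adjoint T) (x i)) l (𝓝 0))
    (h₃ : Tendsto (fun i => adjoint T (T (x i)) - (δ : ℂ) • x i) l (𝓝 0))
    (hT : ∀ v, ‖⟪T v, v⟫_ℂ + w * ⟪v, v⟫_ℂ‖ ≤ w * ‖v‖ ^ 2) : δ = 0 := by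
  set v := fun i => x i + I • T (x i)
  have hlim : Tendsto (fun i => ⟪T (v i), v i⟫_ℂ + w * ⟪v i, v i⟫_ℂ) l
      (𝓝 (2 * I * δ + w * (1 + δ))) :=
    (T.tendsto_inner_apply_add_I_smul hx h₁ h₂ h₃).add
      ((T.tendsto_inner_add_I_smul_self hx h₁ h₃).const_mul _)
  have hbound : Tendsto (fun i => w * ‖v i‖ ^ 2) l (𝓝 (w * (1 + δ))) := by
    have := (Complex.continuous_re.tendsto _).comp (T.tendsto_inner_add_I_smul_self hx h₁ h₃)
    simp only [Function.comp_def, ← re_to_complex, inner_self_eq_norm_sq] at this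
    simpa using this.const_mul w
  have hz := le_of_tendsto_of_tendsto' hlim.norm hbound fun i => hT (v i)
  simpa using im_eq_zero_of_le (K := ℂ) (a := 2 * I * δ + w * (1 + δ)) (by simpa using hz)

end Compression

end ContinuousLinearMap

section NumericalRange

variable {H : Type*} [NormedAddCommGroup H] [InnerProductSpace ℂ H] (A : H →L[ℂ] H)

noncomputable def numRadius : ℝ := sSup ((fun z : ℂ => ‖z‖) '' numRange A)

noncomputable def maxNumRadius : ℝ := sSup ((fun z : ℂ => ‖z‖) '' maxNumRange A)

theorem norm_inner_apply_self_le (x : H) : ‖⟪A x, x⟫_ℂ‖ ≤ ‖A‖ * ‖x‖ ^ 2 :=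
  calc ‖⟪A x, x⟫_ℂ‖ ≤ ‖A x‖ * ‖x‖ := norm_inner_le_norm _ _
    _ ≤ ‖A‖ * ‖x‖ * ‖x‖ := by gcongr; exact A.le_opNorm x
    _ = ‖A‖ * ‖x‖ ^ 2 := by ring

theorem bddAbove_norm_numRange : BddAbove ((fun z : ℂ => ‖z‖) '' numRange A) := by
  refine ⟨‖A‖, ?_⟩
  rintro _ ⟨_, ⟨x, hx, rfl⟩, rfl⟩
  simpa [hx] using norm_inner_apply_self_le A x

theorem norm_inner_apply_self_le_numRadius {x : H} (hx : ‖x‖ = 1) :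
    ‖⟪A x, x⟫_ℂ‖ ≤ numRadius A :=
  le_csSup (bddAbove_norm_numRange A) ⟨_, ⟨x, hx, rfl⟩, rfl⟩

theorem numRadius_nonneg : 0 ≤ numRadius A :=
  Real.sSup_nonneg (by rintro _ ⟨z, -, rfl⟩; exact norm_nonneg z)

theorem numRadius_le_opNorm : numRadius A ≤ ‖A‖ := by
  refine Real.sSup_le ?_ (norm_nonneg A)
  rintro _ ⟨_, ⟨x, hx, rfl⟩, rfl⟩
  simpa [hx] using norm_inner_apply_self_le A x

theorem numRadius_le_of_forall [Nontrivial H] {C : ℝ}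
    (h : ∀ x : H, ‖x‖ = 1 → ‖⟪A x, x⟫_ℂ‖ ≤ C) : numRadius A ≤ C := by
  obtain ⟨x, hx⟩ := exists_norm_eq H zero_le_one
  refine csSup_le ⟨_, ⟨_, ⟨x, hx, rfl⟩, rfl⟩⟩ ?_
  rintro _ ⟨_, ⟨y, hy, rfl⟩, rfl⟩
  exact h y hy

theorem norm_inner_apply_self_le_numRadius_mul (v : H) :
    ‖⟪A v, v⟫_ℂ‖ ≤ numRadius A * ‖v‖ ^ 2 := by
  obtain rfl | hv := eq_or_ne v 0
  · simp
  set u := (‖v‖⁻¹ : ℂ) • v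
  have hvu : v = (‖v‖ : ℂ) • u := by
    rw [smul_inv_smul₀ (by exact_mod_cast norm_ne_zero_iff.2 hv)]
  have hu : ‖u‖ = 1 := norm_smul_inv_norm hv
  have hAu := norm_inner_apply_self_le_numRadius A hu
  rw [hvu]
  simp only [map_smul, inner_smul_left, inner_smul_right, norm_mul, Complex.norm_conj,
    Complex.norm_real, norm_norm, norm_smul, hu]
  nlinarith [norm_nonneg v]

def normInnerRange : Set (ℝ × ℂ) := (fun x => (‖A x‖, ⟪A x, x⟫_ℂ)) '' Metric.sphere 0 1

theorem mem_maxNumRange_iff {μ : ℂ} :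
    μ ∈ maxNumRange A ↔ (‖A‖, μ) ∈ closure (normInnerRange A) := by
  rw [mem_closure_iff_seq_limit]
  constructor
  · rintro ⟨x, hx, hAx, hxμ⟩
    exact ⟨fun n => (‖A (x n)‖, ⟪A (x n), x n⟫_ℂ),
      fun n => ⟨x n, mem_sphere_zero_iff_norm.2 (hx n), rfl⟩, hAx.prodMk_nhds hxμ⟩
  · rintro ⟨p, hp, hpμ⟩
    choose x hx hxp using hp
    obtain rfl : p = fun n => (‖A (x n)‖, ⟪A (x n), x n⟫_ℂ) := funext fun n => (hxp n).symm
    exact ⟨x, fun n => mem_sphere_zero_iff_norm.1 (hx n),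
      (continuous_fst.tendsto _).comp hpμ, (continuous_snd.tendsto _).comp hpμ⟩

theorem closure_normInnerRange_subset : closure (normInnerRange A) ⊆
    {p | ‖p.2‖ ≤ p.1 ∧ p.1 ≤ ‖A‖ ∧ ‖p.2‖ ≤ numRadius A} := by
  refine closure_minimal ?_ ?_
  · rintro _ ⟨x, hx, rfl⟩
    rw [mem_sphere_zero_iff_norm] at hx
    refine ⟨?_, ?_, norm_inner_apply_self_le_numRadius A hx⟩
    · simpa [hx] using norm_inner_le_norm (𝕜 := ℂ) (A x) x
    · simpa [hx] using A.le_opNorm x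
  · exact (isClosed_le continuous_snd.norm continuous_fst).inter
      ((isClosed_le continuous_fst continuous_const).inter
        (isClosed_le continuous_snd.norm continuous_const))

theorem isCompact_closure_normInnerRange : IsCompact (closure (normInnerRange A)) := by
  refine (isCompact_closedBall (0 : ℝ × ℂ) ‖A‖).of_isClosed_subset isClosed_closure ?_
  intro p hp
  obtain ⟨h₁, h₂, -⟩ := closure_normInnerRange_subset A hp
  rw [mem_closedBall_zero_iff, Prod.norm_def, Real.norm_eq_abs,
    abs_of_nonneg ((norm_nonneg _).trans h₁)]
  exact max_le h₂ (h₁.trans h₂)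

theorem isCompact_maxNumRange : IsCompact (maxNumRange A) := by
  have hclosed : IsClosed (maxNumRange A) := by
    rw [show maxNumRange A = (‖A‖, ·) ⁻¹' closure (normInnerRange A) from
      Set.ext fun _ => mem_maxNumRange_iff A]
    exact isClosed_closure.preimage (Continuous.prodMk_right _)
  refine (isCompact_closedBall (0 : ℂ) ‖A‖).of_isClosed_subset hclosed fun μ hμ => ?_
  obtain ⟨h₁, h₂, -⟩ := closure_normInnerRange_subset A ((mem_maxNumRange_iff A).1 hμ)
  exact mem_closedBall_zero_iff.2 h₁

theorem maxNumRange_nonempty [Nontrivial H] : (maxNumRange A).Nonempty := by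
  obtain ⟨x, hx⟩ := exists_norm_eq H zero_le_one
  obtain ⟨p, hp, hmax⟩ := (isCompact_closure_normInnerRange A).exists_isMaxOn
    ⟨_, subset_closure ⟨x, mem_sphere_zero_iff_norm.2 hx, rfl⟩⟩ continuous_fst.continuousOn
  have hp₁ : p.1 = ‖A‖ := by
    refine le_antisymm (closure_normInnerRange_subset A hp).2.1 ?_
    refine A.opNorm_le_of_unit_norm ((norm_nonneg _).trans (closure_normInnerRange_subset A hp).1)
      fun y hy => ?_
    exact hmax (subset_closure ⟨y, mem_sphere_zero_iff_norm.2 hy, rfl⟩)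
  exact ⟨p.2, (mem_maxNumRange_iff A).2 (hp₁ ▸ hp)⟩

theorem maxNumRadius_le_numRadius : maxNumRadius A ≤ numRadius A := by
  refine Real.sSup_le ?_ (numRadius_nonneg A)
  rintro _ ⟨μ, hμ, rfl⟩
  exact (closure_normInnerRange_subset A ((mem_maxNumRange_iff A).1 hμ)).2.2

theorem exists_mem_maxNumRange_norm_eq_maxNumRadius [Nontrivial H] :
    ∃ μ ∈ maxNumRange A, ‖μ‖ = maxNumRadius A :=
  ((isCompact_maxNumRange A).image continuous_norm).sSup_mem
    ((maxNumRange_nonempty A).image _)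

theorem numRadius_le_maxNumRadius [Nontrivial H] (h : numRadius A = ‖A‖) :
    numRadius A ≤ maxNumRadius A := by
  obtain ⟨x, hx⟩ := exists_norm_eq H zero_le_one
  obtain ⟨p, hp, hmax⟩ := (isCompact_closure_normInnerRange A).exists_isMaxOn
    ⟨_, subset_closure ⟨x, mem_sphere_zero_iff_norm.2 hx, rfl⟩⟩
    continuous_snd.norm.continuousOn
  obtain ⟨hp₁, hp₂, -⟩ := closure_normInnerRange_subset A hp
  have hnum : numRadius A ≤ ‖p.2‖ := numRadius_le_of_forall A fun y hy =>
    hmax (subset_closure ⟨y, mem_sphere_zero_iff_norm.2 hy, rfl⟩)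
  have hμ : p.2 ∈ maxNumRange A := by
    rw [mem_maxNumRange_iff]
    convert hp
    linarith
  refine hnum.trans (le_csSup ⟨‖A‖, ?_⟩ ⟨p.2, hμ, rfl⟩)
  rintro _ ⟨μ, hμ, rfl⟩
  obtain ⟨h₁, h₂, -⟩ := closure_normInnerRange_subset A ((mem_maxNumRange_iff A).1 hμ)
  exact h₁.trans h₂

theorem mul_mem_maxNumRange_smul {μ : ℂ} (hμ : μ ∈ maxNumRange A) {c : ℂ} (hc : ‖c‖ = 1) :
    c * μ ∈ maxNumRange (starRingEnd ℂ c • A) := by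
  obtain ⟨x, hx, hAx, hxμ⟩ := hμ
  refine ⟨x, hx, ?_, ?_⟩
  · simpa [norm_smul, hc] using hAx
  · simpa [inner_smul_left, mul_comm] using hxμ.const_mul c

end NumericalRange

section Normaloid

open ContinuousLinearMap (adjoint)

variable {H : Type*} [NormedAddCommGroup H] [InnerProductSpace ℂ H] [CompleteSpace H]
  (A : H →L[ℂ] H)

theorem opNorm_le_of_ofReal_mem_maxNumRange {w : ℝ} (hw : (w : ℂ) ∈ maxNumRange A)
    (hA : ∀ v, ‖⟪A v, v⟫_ℂ‖ ≤ w * ‖v‖ ^ 2) : ‖A‖ ≤ w := by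
  obtain ⟨x, hx, hAx, hxw⟩ := hw
  have hw₀ : 0 ≤ w := by simpa [hx 0] using (norm_nonneg _).trans (hA (x 0))
  set T := A - (w : ℂ) • ContinuousLinearMap.id ℂ H
  have hTv : ∀ v, ⟪T v, v⟫_ℂ = ⟪A v, v⟫_ℂ - ((w * ‖v‖ ^ 2 : ℝ) : ℂ) := fun v => by
    simp [T, inner_self_eq_norm_sq_to_K]
  have hT : ∀ v, re ⟪T v, v⟫_ℂ ≤ 0 := fun v => by
    rw [hTv, map_sub, re_to_complex, re_to_complex, Complex.ofReal_re, sub_nonpos]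
    exact (Complex.re_le_norm _).trans (hA v)
  have h₁ : Tendsto (fun n => ⟪T (x n), x n⟫_ℂ) atTop (𝓝 0) := by
    simpa [hTv, hx] using hxw.sub_const (w : ℂ)
  have h₂ := T.tendsto_add_adjoint_apply hT h₁
  set δ : ℝ := ‖A‖ ^ 2 - w ^ 2
  have h₃ : Tendsto (fun n => adjoint T (T (x n)) - (δ : ℂ) • x n) atTop (𝓝 0) := by
    have key : ∀ n, adjoint T (T (x n)) - (δ : ℂ) • x n
        = (adjoint A (A (x n)) - ((‖A‖ ^ 2 : ℝ) : ℂ) • x n) - (w : ℂ) • (T + adjoint T) (x n) :=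
      fun n => by
        simp only [T, δ, map_sub, map_smulₛₗ, ContinuousLinearMap.adjoint_id,
          Complex.conj_ofReal, RingHom.id_apply, sub_apply, add_apply, smul_apply,
          ContinuousLinearMap.id_apply, Complex.ofReal_sub, Complex.ofReal_pow]
        module
    simpa only [key, smul_zero, sub_zero] using
      (A.tendsto_adjoint_apply_apply_sub hx hAx).sub (h₂.const_smul (w : ℂ))
  have hδ : δ = 0 := T.eq_zero_of_forall_norm_inner_add_le (w := w) hx h₁ h₂ h₃ fun v => by
    simpa [T] using hA v
  nlinarith [norm_nonneg A]

theorem opNorm_le_norm_of_mem_maxNumRange {μ : ℂ} (hμ : μ ∈ maxNumRange A)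
    (hA : ∀ v, ‖⟪A v, v⟫_ℂ‖ ≤ ‖μ‖ * ‖v‖ ^ 2) : ‖A‖ ≤ ‖μ‖ := by
  obtain ⟨c, hc, hcμ⟩ := RCLike.exists_norm_eq_mul_self μ
  have hB := opNorm_le_of_ofReal_mem_maxNumRange (starRingEnd ℂ c • A)
    (hcμ ▸ mul_mem_maxNumRange_smul A hμ hc) fun v => by simpa [inner_smul_left, hc] using hA v
  simpa [norm_smul, hc] using hB

end Normaloid

theorem normaloid_iff_maxNumRadius_eq_numRadius {H : Type*}
    [NormedAddCommGroup H] [InnerProductSpace ℂ H] [CompleteSpace H]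
    [Nontrivial H] (A : H →L[ℂ] H) :
    sSup ((fun z : ℂ => ‖z‖) '' numRange A) = ‖A‖ ↔
      sSup ((fun z : ℂ => ‖z‖) '' maxNumRange A) = sSup ((fun z : ℂ => ‖z‖) '' numRange A) := by
  change numRadius A = ‖A‖ ↔ maxNumRadius A = numRadius A
  refine ⟨fun h => (maxNumRadius_le_numRadius A).antisymm (numRadius_le_maxNumRadius A h),
    fun h => (numRadius_le_opNorm A).antisymm ?_⟩
  obtain ⟨μ, hμ, hμA⟩ := exists_mem_maxNumRange_norm_eq_maxNumRadius A
  rw [h] at hμA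
  rw [← hμA]
  exact opNorm_le_norm_of_mem_maxNumRange A hμ (hμA ▸ norm_inner_apply_self_le_numRadius_mul A)
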